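/- Let $n \le q < \infty$, let $h \in L_{q,loc}(\mathbb{R}^n)$ be nonnegative, and define $\delta_q(x,y) = \|x-y\| \sup_{Q \ni x,y}(|Q|^{-1}\int_Q h^q)^{1/q}$. Let $d_q(x,y)$ be the geodesic (chain) distance: the infimum of $\sum_{i=0}^{m-1} \delta_q(x_i,x_{i+1})$ over all finite chains from $x$ to $y$. Then $d_q(x,y) \le \delta_q(x,y) \le 16\, d_q(x,y)$ for all $x,y \in \mathbb{R}^n$. -/

import Mathlib

/-!
Fix a cube `Q = closedBall c r` containing `x` and `y`, and a chain from `x` to `y`; follow the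
chain until it first leaves `2Q`. A step from a point `a ∈ 2Q` to `b` is bounded below via the
cube of radius `max (3r) ‖a - b‖` about `a`, which contains both `b` and `Q`. Shrinking a cube by
a factor `t ≤ 1` lowers `(|Q|⁻¹ ∫_Q w)^{1/q}` by at most `t^{n/q} ≥ t` because `n ≤ q`, so the
step costs at least `min r (‖a - b‖ / 3)` times the average over `Q`. Either one step before the
exit is at least `3r` long, or these steps have total length at least `‖x - y‖ / 2`; in both
cases `δ_q(x, y) ≤ 6 d_q(x, y)`.
-/

open MeasureTheory ENNReal Metric

/-- sup over closed axis-parallel cubes (sup-norm closed balls) containing `x` and `y`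
of `(|Q|⁻¹ ∫_Q w)^{1/q}`. -/
noncomputable def cubeSup (n : ℕ) (q : ℝ) (w : (Fin n → ℝ) → ℝ≥0∞) (x y : Fin n → ℝ) : ℝ≥0∞ :=
  ⨆ (c : Fin n → ℝ) (r : ℝ) (_ : 0 < r) (_ : x ∈ closedBall c r) (_ : y ∈ closedBall c r),
    ((∫⁻ u in closedBall c r, w u) / volume (closedBall c r)) ^ (1 / q)

/-- `δ_q(x,y:h) = ‖x-y‖ · sup_{Q ∋ x,y}(|Q|⁻¹ ∫_Q h^q)^{1/q}` (the weight `w` stands for `h^q`). -/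
noncomputable def deltaQ (n : ℕ) (q : ℝ) (w : (Fin n → ℝ) → ℝ≥0∞) (x y : Fin n → ℝ) : ℝ≥0∞ :=
  ENNReal.ofReal ‖x - y‖ * cubeSup n q w x y

/-- The geodesic (chain) distance associated with `δ_q`. -/
noncomputable def geoQ (n : ℕ) (q : ℝ) (w : (Fin n → ℝ) → ℝ≥0∞) (x y : Fin n → ℝ) : ℝ≥0∞ :=
  ⨅ (m : ℕ) (z : ℕ → Fin n → ℝ) (_ : z 0 = x) (_ : z m = y),
    ∑ i ∈ Finset.range m, deltaQ n q w (z i) (z (i + 1))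

noncomputable def cubeAvg (n : ℕ) (q : ℝ) (w : (Fin n → ℝ) → ℝ≥0∞) (c : Fin n → ℝ) (r : ℝ) :
    ℝ≥0∞ :=
  ((∫⁻ u in closedBall c r, w u) / volume (closedBall c r)) ^ (1 / q)

theorem exists_exit_index {α : Type*} [PseudoMetricSpace α] {z : ℕ → α} {c : α} {r : ℝ}
    {m : ℕ} (h0 : z 0 ∈ closedBall c r) (hm : z m ∈ closedBall c r) :
    ∃ k ≤ m, (∀ i < k, z i ∈ closedBall c (2 * r)) ∧
      dist (z 0) (z m) ≤ 2 * dist (z 0) (z k) := by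
  classical
  by_cases hall : ∀ i ≤ m, z i ∈ closedBall c (2 * r)
  · exact ⟨m, le_rfl, fun i hi => hall i hi.le, by linarith [dist_nonneg (x := z 0) (y := z m)]⟩
  push Not at hall
  obtain ⟨j, hjm, hj⟩ := hall
  have hex : ∃ i, z i ∉ closedBall c (2 * r) := ⟨j, hj⟩
  set k := Nat.find hex
  refine ⟨k, (Nat.find_min' hex hj).trans hjm, fun i hi => not_not.mp (Nat.find_min hex hi), ?_⟩
  have hk : 2 * r < dist (z k) c := not_le.mp (Nat.find_spec hex)
  rw [mem_closedBall] at h0 hm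
  linarith [dist_triangle_right (z 0) (z m) c, dist_triangle_left (z k) c (z 0)]

theorem le_six_mul_sum_min {ι : Type*} {s : Finset ι} {d : ι → ℝ} {r t : ℝ} (hr : 0 ≤ r)
    (hd : ∀ i ∈ s, 0 ≤ d i) (ht_r : t ≤ 2 * r) (ht_d : t ≤ 2 * ∑ i ∈ s, d i) :
    t ≤ 6 * ∑ i ∈ s, min r (d i / 3) := by
  by_cases hlong : ∃ i ∈ s, r ≤ d i / 3
  · obtain ⟨i, hi, hri⟩ := hlong
    have : r ≤ ∑ j ∈ s, min r (d j / 3) :=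
      (min_eq_left hri).ge.trans <| Finset.single_le_sum (f := fun j => min r (d j / 3))
        (fun j hj => le_min hr (by linarith [hd j hj])) hi
    linarith
  · push Not at hlong
    rw [Finset.sum_congr rfl fun i hi => min_eq_right (hlong i hi).le, ← Finset.sum_div]
    linarith

theorem volume_closedBall_div_volume_closedBall {n : ℕ} (c z : Fin n → ℝ) {r s : ℝ}
    (hr : 0 ≤ r) (hs : 0 < s) :
    volume (closedBall c r) / volume (closedBall z s) = ENNReal.ofReal (r / s) ^ n := by
  rw [Real.volume_pi_closedBall c hr, Real.volume_pi_closedBall z hs.le, Fintype.card_fin,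
    ← ENNReal.ofReal_div_of_pos (by positivity), ← ENNReal.ofReal_pow (by positivity), ← div_pow,
    mul_div_mul_left _ _ two_ne_zero]

section Cubes

variable {n : ℕ} {q : ℝ} {w : (Fin n → ℝ) → ℝ≥0∞}

theorem cubeAvg_le_cubeSup {x y c : Fin n → ℝ} {r : ℝ} (hr : 0 < r) (hx : x ∈ closedBall c r)
    (hy : y ∈ closedBall c r) : cubeAvg n q w c r ≤ cubeSup n q w x y :=
  le_iSup_of_le c <| le_iSup_of_le r <| le_iSup_of_le hr <| le_iSup_of_le hx <|
    le_iSup_of_le hy le_rfl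

theorem ofReal_div_mul_cubeAvg_le (hq0 : 0 < q) (hq : (n : ℝ) ≤ q) {c z : Fin n → ℝ} {r s : ℝ}
    (hr : 0 < r) (hrs : r ≤ s) (hsub : closedBall c r ⊆ closedBall z s) :
    ENNReal.ofReal (r / s) * cubeAvg n q w c r ≤ cubeAvg n q w z s := by
  have hs : 0 < s := hr.trans_le hrs
  have hV₀ : volume (closedBall c r) ≠ 0 := (measure_closedBall_pos volume c hr).ne'
  have hV_top : volume (closedBall c r) ≠ ∞ := measure_closedBall_lt_top.ne
  set I := ∫⁻ u in closedBall c r, w u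
  have hsplit : I / volume (closedBall z s) =
      I / volume (closedBall c r) * ENNReal.ofReal (r / s) ^ n := by
    rw [← volume_closedBall_div_volume_closedBall c z hr.le hs, ← mul_div_assoc,
      ENNReal.div_mul_cancel hV₀ hV_top]
  -- `r / s ≤ 1` and `n / q ≤ 1`
  have hexp : ENNReal.ofReal (r / s) ≤ (ENNReal.ofReal (r / s) ^ n) ^ (1 / q) := by
    rw [← ENNReal.rpow_natCast, ← ENNReal.rpow_mul]
    conv_lhs => rw [← ENNReal.rpow_one (ENNReal.ofReal (r / s))]
    refine ENNReal.rpow_le_rpow_of_exponent_ge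
      (ENNReal.ofReal_le_one.mpr (div_le_one_of_le₀ hrs hs.le)) ?_
    rwa [mul_one_div, div_le_one hq0]
  calc ENNReal.ofReal (r / s) * cubeAvg n q w c r
      ≤ (ENNReal.ofReal (r / s) ^ n) ^ (1 / q) * cubeAvg n q w c r := by gcongr
    _ = (I / volume (closedBall z s)) ^ (1 / q) := by
        rw [hsplit, ENNReal.mul_rpow_of_nonneg _ _ (by positivity), mul_comm]; rfl
    _ ≤ cubeAvg n q w z s := by
        unfold cubeAvg
        gcongr
        exact lintegral_mono_set hsub

theorem ofReal_min_mul_cubeAvg_le_deltaQ (hq0 : 0 < q) (hq : (n : ℝ) ≤ q) {c a b : Fin n → ℝ}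
    {r : ℝ} (hr : 0 < r) (ha : a ∈ closedBall c (2 * r)) :
    ENNReal.ofReal (min r (‖a - b‖ / 3)) * cubeAvg n q w c r ≤ deltaQ n q w a b := by
  -- the cube of radius `s` about `a` contains `b` and the cube of radius `r` about `c`
  set s := max (3 * r) ‖a - b‖
  have hs3 : 3 * r ≤ s := le_max_left _ _
  have hs : 0 < s := by linarith
  have hb : b ∈ closedBall a s := by
    rw [mem_closedBall, dist_comm, dist_eq_norm]
    exact le_max_right _ _
  have hsub : closedBall c r ⊆ closedBall a s :=
    closedBall_subset_closedBall' (by rw [dist_comm]; linarith [mem_closedBall.mp ha])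
  have hmin : min r (‖a - b‖ / 3) ≤ ‖a - b‖ * (r / s) := by
    rw [mul_div_assoc', le_div_iff₀ hs]
    rcases max_cases (3 * r) ‖a - b‖ with ⟨h, _⟩ | ⟨h, _⟩ <;> simp only [s, h] <;>
      nlinarith [min_le_left r (‖a - b‖ / 3), min_le_right r (‖a - b‖ / 3), norm_nonneg (a - b)]
  calc ENNReal.ofReal (min r (‖a - b‖ / 3)) * cubeAvg n q w c r
      ≤ ENNReal.ofReal ‖a - b‖ * (ENNReal.ofReal (r / s) * cubeAvg n q w c r) := by
        rw [← mul_assoc, ← ENNReal.ofReal_mul (norm_nonneg _)]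
        gcongr
    _ ≤ ENNReal.ofReal ‖a - b‖ * cubeSup n q w a b := by
        gcongr
        exact (ofReal_div_mul_cubeAvg_le hq0 hq hr (by linarith) hsub).trans
          (cubeAvg_le_cubeSup hs (mem_closedBall_self hs.le) hb)

theorem ofReal_norm_mul_cubeAvg_le_six_mul_sum (hq0 : 0 < q) (hq : (n : ℝ) ≤ q)
    {c x y : Fin n → ℝ} {r : ℝ} (hr : 0 < r) (hx : x ∈ closedBall c r) (hy : y ∈ closedBall c r)
    {m : ℕ} {z : ℕ → Fin n → ℝ} (hz0 : z 0 = x) (hzm : z m = y) :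
    ENNReal.ofReal ‖x - y‖ * cubeAvg n q w c r ≤
      6 * ∑ i ∈ Finset.range m, deltaQ n q w (z i) (z (i + 1)) := by
  subst hz0 hzm
  obtain ⟨k, hkm, hk_in, hk_far⟩ := exists_exit_index hx hy
  have hnorm : ‖z 0 - z m‖ ≤ 6 * ∑ i ∈ Finset.range k, min r (‖z i - z (i + 1)‖ / 3) := by
    refine le_six_mul_sum_min hr.le (fun i _ => norm_nonneg _) ?_ ?_
    · rw [mem_closedBall] at hx hy
      linarith [dist_triangle_right (z 0) (z m) c, dist_eq_norm (z 0) (z m)]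
    · have := dist_le_range_sum_dist z k
      simp only [dist_eq_norm] at this hk_far
      linarith
  calc ENNReal.ofReal ‖z 0 - z m‖ * cubeAvg n q w c r
      ≤ ENNReal.ofReal (6 * ∑ i ∈ Finset.range k, min r (‖z i - z (i + 1)‖ / 3)) *
          cubeAvg n q w c r := by gcongr
    _ = 6 * ∑ i ∈ Finset.range k,
          ENNReal.ofReal (min r (‖z i - z (i + 1)‖ / 3)) * cubeAvg n q w c r := by
        rw [ENNReal.ofReal_mul (by norm_num), ENNReal.ofReal_sum_of_nonneg
          (fun i _ => by positivity), ENNReal.ofReal_ofNat, mul_assoc, Finset.sum_mul]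
    _ ≤ 6 * ∑ i ∈ Finset.range k, deltaQ n q w (z i) (z (i + 1)) := by
        gcongr with i hi
        exact ofReal_min_mul_cubeAvg_le_deltaQ hq0 hq hr (hk_in i (Finset.mem_range.mp hi))
    _ ≤ 6 * ∑ i ∈ Finset.range m, deltaQ n q w (z i) (z (i + 1)) := by
        gcongr

theorem geoQ_le_deltaQ (x y : Fin n → ℝ) : geoQ n q w x y ≤ deltaQ n q w x y := by
  refine iInf_le_of_le 1 <| iInf_le_of_le (fun i => if i = 0 then x else y) <|
    iInf_le_of_le (by simp) <| iInf_le_of_le (by simp) ?_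
  simp

theorem deltaQ_le_six_mul_geoQ (hq : (n : ℝ) ≤ q) (x y : Fin n → ℝ) :
    deltaQ n q w x y ≤ 6 * geoQ n q w x y := by
  rcases Nat.eq_zero_or_pos n with rfl | hn
  · rw [Subsingleton.elim x y, deltaQ, sub_self, norm_zero, ENNReal.ofReal_zero, zero_mul]
    exact zero_le
  have hq0 : 0 < q := lt_of_lt_of_le (by exact_mod_cast hn) hq
  rw [deltaQ, cubeSup, geoQ]
  simp only [ENNReal.mul_iSup, ENNReal.mul_iInf_of_ne (a := 6) (by norm_num) (by norm_num)]
  exact iSup_le fun c => iSup_le fun r => iSup_le fun hr => iSup_le fun hx => iSup_le fun hy =>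
    le_iInf fun m => le_iInf fun z => le_iInf fun hz0 => le_iInf fun hzm =>
      ofReal_norm_mul_cubeAvg_le_six_mul_sum hq0 hq hr hx hy hz0 hzm

end Cubes

theorem stmt_1_general (n : ℕ) (q : ℝ) (hq : (n : ℝ) ≤ q)
    (h : (Fin n → ℝ) → ℝ)
    (x y : Fin n → ℝ) :
    geoQ n q (fun u => ENNReal.ofReal (h u) ^ q) x y ≤
        deltaQ n q (fun u => ENNReal.ofReal (h u) ^ q) x y ∧
      deltaQ n q (fun u => ENNReal.ofReal (h u) ^ q) x y ≤
        16 * geoQ n q (fun u => ENNReal.ofReal (h u) ^ q) x y :=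
  ⟨geoQ_le_deltaQ x y,
    (deltaQ_le_six_mul_geoQ hq x y).trans (mul_le_mul_left (by norm_num) _)⟩

theorem stmt_1 (n : ℕ) (q : ℝ) (hq : (n : ℝ) ≤ q)
    (h : (Fin n → ℝ) → ℝ) (hh : ∀ u, 0 ≤ h u)
    (hloc : LocallyIntegrable (fun u => h u ^ q) volume)
    (x y : Fin n → ℝ) :
    geoQ n q (fun u => ENNReal.ofReal (h u) ^ q) x y ≤
        deltaQ n q (fun u => ENNReal.ofReal (h u) ^ q) x y ∧
      deltaQ n q (fun u => ENNReal.ofReal (h u) ^ q) x y ≤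
        16 * geoQ n q (fun u => ENNReal.ofReal (h u) ^ q) x y :=
  stmt_1_general n q hq h x y
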